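/- Existence of unconstrained LR-QR minimizers (Lemma J.3). Let α ∈ (0,1/2] and ℋ = {x ↦ ⟨γ,Φ(x)⟩ : γ ∈ ℝ^d} with norm ‖⟨γ,Φ⟩‖ = ‖γ‖₂. Assume: Σ = E₁[Φ(X)Φ(X)ᵀ] is positive definite with finite largest eigenvalue; the conditional distribution of S given X = x admits a density for every x, uniformly bounded; c_indep := inf_{‖v‖₂=1} E₁[|⟨v,Φ(X)⟩|] > 0; there is a minimizer h₀* of h ↦ E₁[ℓ_α(h(X),S)] over ℋ∖{0} with E₁[r h₀*]/E₁[(h₀*)²]^{1/2} > 0; E₁[r²] < ∞; 1 ∈ ℋ; and for each λ ≥ 0 there exist h ∈ ℋ, β ∈ ℝ with E₁[ℓ_α(h,S)] + λE₁[(βh − r)²] < E₁[ℓ_α(0,S)] + λE₁[r²]. Then for every λ ≥ 0 there exists a global minimizer (h*_λ, β*_λ) of L_λ(h,β) = E₁[ℓ_α(h(X),S)] + λ(β²E₁[h(X)²] − 2βE₂[h(X)]) over ℋ × ℝ. -/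

import Mathlib

open MeasureTheory ProbabilityTheory Set
open scoped RealInnerProductSpace ENNReal

/-- The pinball (quantile) loss: `ℓ_α(c,s) = (1−α)(s−c)` if `s ≥ c`, and `α(c−s)` if `s < c`. -/
noncomputable def pinball (α c s : ℝ) : ℝ := if c ≤ s then (1 - α) * (s - c) else α * (c - s)


lemma pinball_nonneg {α : ℝ} (hα0 : 0 ≤ α) (hα1 : α ≤ 1) (c s : ℝ) : 0 ≤ pinball α c s := by
  unfold pinball; split_ifs with h <;> nlinarith

lemma pinball_le_abs {α : ℝ} (hα0 : 0 ≤ α) (hα1 : α ≤ 1) (c s : ℝ) :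
    pinball α c s ≤ |c - s| := by
  unfold pinball; split_ifs with h
  · rw [abs_of_nonpos (by linarith)]; nlinarith
  · rw [abs_of_nonneg (by linarith)]; nlinarith

lemma alpha_abs_le_pinball {α : ℝ} (hα0 : 0 ≤ α) (hα : α ≤ 1/2) (c s : ℝ) :
    α * |c - s| ≤ pinball α c s := by
  unfold pinball; split_ifs with h
  · rw [abs_of_nonpos (by linarith)]; nlinarith
  · rw [abs_of_nonneg (by linarith)]

lemma pinball_lip {α : ℝ} (hα0 : 0 ≤ α) (hα1 : α ≤ 1) (c c' s : ℝ) :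
    pinball α c s ≤ pinball α c' s + |c - c'| := by
  unfold pinball; split_ifs with h h'
  · cases abs_cases (c - c') with
    | inl hh => nlinarith
    | inr hh => nlinarith
  · cases abs_cases (c - c') with
    | inl hh => nlinarith
    | inr hh => nlinarith
  · cases abs_cases (c - c') with
    | inl hh => nlinarith
    | inr hh => nlinarith
  · cases abs_cases (c - c') with
    | inl hh => nlinarith
    | inr hh => nlinarith

lemma pinball_decomp {α : ℝ} (c s : ℝ) (hs : 0 ≤ s) :
    pinball α c s = pinball α 0 s - (1 - α) * c + max (c - s) 0 := by
  unfold pinball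
  rcases le_or_gt c s with h | h
  · rw [if_pos h, if_pos hs, max_eq_right (by linarith)]; ring
  · rw [if_neg (not_le.mpr h), if_pos hs, max_eq_left (by linarith)]; ring

lemma measurable_pinball {α : ℝ} : Measurable fun q : ℝ × ℝ => pinball α q.1 q.2 := by
  unfold pinball
  exact Measurable.ite (measurableSet_le measurable_fst measurable_snd)
    (measurable_const.mul (measurable_snd.sub measurable_fst))
    (measurable_const.mul (measurable_fst.sub measurable_snd))

lemma quad_coeff_zero {c1 c2 : ℝ} (h2 : 0 ≤ c2) (h : ∀ s : ℝ, 0 ≤ c2 * s ^ 2 + 2 * c1 * s) :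
    c1 = 0 := by
  by_contra hc
  set t : ℝ := 1 / (c2 + 1) with ht_def
  have ht : 0 < t := by positivity
  have ht2 : c2 * t < 2 := by
    rw [ht_def]
    rw [mul_one_div, div_lt_iff₀ (by linarith)]
    linarith
  have hs := h (-c1 * t)
  have h3 : 0 < c1 ^ 2 := by positivity
  nlinarith [mul_pos (mul_pos h3 ht) ht, mul_pos h3 ht]

/-- The population LR-QR risk `L_λ(⟨γ,Φ⟩, β)`, with `E₂[h(X)] = E₁[r(X)h(X)]`. -/
noncomputable def popLoss {𝒳 : Type*} [MeasurableSpace 𝒳] {d : ℕ}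
    (Φ : 𝒳 → EuclideanSpace ℝ (Fin d)) (P : Measure (𝒳 × ℝ)) (μX : Measure 𝒳)
    (r : 𝒳 → ℝ) (α lam : ℝ) (γ : EuclideanSpace ℝ (Fin d)) (β : ℝ) : ℝ :=
  (∫ p, pinball α ⟪γ, Φ p.1⟫ p.2 ∂P)
    + lam * (β ^ 2 * ∫ x, ⟪γ, Φ x⟫ ^ 2 ∂μX - 2 * β * ∫ x, r x * ⟪γ, Φ x⟫ ∂μX)

set_option maxHeartbeats 4000000 in
/-- Lemma J.3: existence of unconstrained LR-QR minimizers.  Under the stated conditions, for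
every `λ ≥ 0` the population LR-QR risk `L_λ` has a global minimizer over `ℋ × ℝ`, where
`ℋ = {⟨γ,Φ(·)⟩ : γ ∈ ℝ^d}`. -/
theorem lrqr_unconstrained_minimizer_exists
    {𝒳 : Type*} [MeasurableSpace 𝒳] {d : ℕ}
    (Φ : 𝒳 → EuclideanSpace ℝ (Fin d)) (hΦmeas : Measurable Φ)
    (μX : Measure 𝒳) [IsProbabilityMeasure μX]
    (κ : Kernel 𝒳 ℝ) [IsMarkovKernel κ]
    (P : Measure (𝒳 × ℝ)) [IsProbabilityMeasure P] (hP : P = μX.compProd κ)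
    -- scores lie in [0,1]
    (hS01 : ∀ x, κ x (Icc (0 : ℝ) 1) = 1)
    -- Σ = E₁[ΦΦᵀ] is positive definite with finite largest eigenvalue
    (lmin lmax : ℝ) (hlmin0 : 0 < lmin)
    (hlmin : ∀ v : EuclideanSpace ℝ (Fin d), lmin * ‖v‖ ^ 2 ≤ ∫ x, ⟪v, Φ x⟫ ^ 2 ∂μX)
    (hlmax : ∀ v : EuclideanSpace ℝ (Fin d), (∫ x, ⟪v, Φ x⟫ ^ 2 ∂μX) ≤ lmax * ‖v‖ ^ 2)
    -- the conditional law of S given X = x has a uniformly bounded density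
    (fdens : 𝒳 → ℝ → ℝ) (Cf : ℝ) (hCf : 0 ≤ Cf)
    (hdens_nonneg : ∀ x s, 0 ≤ fdens x s) (hdens_bdd : ∀ x s, fdens x s ≤ Cf)
    (hdens : ∀ x, κ x = (volume : Measure ℝ).withDensity (fun s => ENNReal.ofReal (fdens x s)))
    -- independence of the basis functions
    (cindep : ℝ) (hcindep0 : 0 < cindep)
    (hindep : ∀ v : EuclideanSpace ℝ (Fin d), ‖v‖ = 1 → cindep ≤ ∫ x, |⟪v, Φ x⟫| ∂μX)
    (α : ℝ) (hα0 : 0 < α) (hα : α ≤ 1 / 2)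
    -- likelihood ratio
    (r : 𝒳 → ℝ) (hrmeas : Measurable r) (hrnn : ∀ x, 0 ≤ r x)
    (hrmean : ∫ x, r x ∂μX = 1)
    (hr2 : Integrable (fun x => r x ^ 2) μX)
    -- alignment condition
    (halign : ∃ γ0 : EuclideanSpace ℝ (Fin d), γ0 ≠ 0 ∧
      (∀ γ : EuclideanSpace ℝ (Fin d), γ ≠ 0 →
        (∫ p, pinball α ⟪γ0, Φ p.1⟫ p.2 ∂P) ≤ ∫ p, pinball α ⟪γ, Φ p.1⟫ p.2 ∂P) ∧
      0 < (∫ x, r x * ⟪γ0, Φ x⟫ ∂μX) / Real.sqrt (∫ x, ⟪γ0, Φ x⟫ ^ 2 ∂μX))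
    -- the constant function 1 belongs to ℋ
    (hone : ∃ γ1 : EuclideanSpace ℝ (Fin d), ∀ x, ⟪γ1, Φ x⟫ = 1)
    -- zero is suboptimal for every λ ≥ 0
    (hzero : ∀ lam : ℝ, 0 ≤ lam → ∃ (γ : EuclideanSpace ℝ (Fin d)) (β : ℝ),
      (∫ p, pinball α ⟪γ, Φ p.1⟫ p.2 ∂P) + lam * ∫ x, (β * ⟪γ, Φ x⟫ - r x) ^ 2 ∂μX
        < (∫ p, pinball α (0 : ℝ) p.2 ∂P) + lam * ∫ x, r x ^ 2 ∂μX) :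
    ∀ lam : ℝ, 0 ≤ lam →
      ∃ (γstar : EuclideanSpace ℝ (Fin d)) (βstar : ℝ),
        ∀ (γ : EuclideanSpace ℝ (Fin d)) (β : ℝ),
          popLoss Φ P μX r α lam γstar βstar ≤ popLoss Φ P μX r α lam γ β := by
  intro lam hlam
  classical
  obtain ⟨γ1, hγ1⟩ := hone
  clear halign hzero
  have hmeasI : ∀ v : EuclideanSpace ℝ (Fin d), Measurable fun x => ⟪v, Φ x⟫ :=
    fun v => measurable_const.inner hΦmeas
  have hsqInt : ∀ v : EuclideanSpace ℝ (Fin d), Integrable (fun x => ⟪v, Φ x⟫ ^ 2) μX := by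
    intro v
    by_cases hv : v = 0
    · subst hv
      simp only [inner_zero_left]
      simpa using integrable_const (0:ℝ)
    · by_contra h
      have h2 := hlmin v
      rw [integral_undef h] at h2
      have hn : 0 < ‖v‖ := norm_pos_iff.mpr hv
      nlinarith [mul_pos hlmin0 (pow_pos hn 2)]
  have hIntv : ∀ v : EuclideanSpace ℝ (Fin d), Integrable (fun x => ⟪v, Φ x⟫) μX := by
    intro v
    refine Integrable.mono' ((hsqInt v).add (integrable_const 1)) (hmeasI v).aestronglyMeasurable ?_
    filter_upwards with x
    simp only [Pi.add_apply, Real.norm_eq_abs]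
    nlinarith [sq_nonneg (|⟪v, Φ x⟫| - 1), sq_abs ⟪v, Φ x⟫, abs_nonneg ⟪v, Φ x⟫]
  have habsInt : ∀ v : EuclideanSpace ℝ (Fin d), Integrable (fun x => |⟪v, Φ x⟫|) μX :=
    fun v => (hIntv v).abs
  have hmulInt : ∀ v w : EuclideanSpace ℝ (Fin d),
      Integrable (fun x => ⟪v, Φ x⟫ * ⟪w, Φ x⟫) μX := by
    intro v w
    refine Integrable.mono' (((hsqInt v).add (hsqInt w)).div_const 2)
      ((hmeasI v).mul (hmeasI w)).aestronglyMeasurable ?_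
    filter_upwards with x
    simp only [Pi.add_apply]
    rw [Real.norm_eq_abs, abs_mul]
    nlinarith [sq_nonneg (|⟪v, Φ x⟫| - |⟪w, Φ x⟫|), sq_abs ⟪v, Φ x⟫, sq_abs ⟪w, Φ x⟫]
  have hrInt : ∀ v : EuclideanSpace ℝ (Fin d), Integrable (fun x => r x * ⟪v, Φ x⟫) μX := by
    intro v
    refine Integrable.mono' ((hr2.add (hsqInt v)).div_const 2)
      (hrmeas.mul (hmeasI v)).aestronglyMeasurable ?_
    filter_upwards with x
    simp only [Pi.add_apply]
    rw [Real.norm_eq_abs, abs_mul]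
    nlinarith [sq_nonneg (|r x| - |⟪v, Φ x⟫|), sq_abs (r x), sq_abs ⟪v, Φ x⟫,
      abs_nonneg (r x), abs_nonneg ⟪v, Φ x⟫]
  have habsint : ∀ (f : 𝒳 → ℝ), |∫ x, f x ∂μX| ≤ ∫ x, |f x| ∂μX := by
    intro f
    simpa [Real.norm_eq_abs] using norm_integral_le_integral_norm (μ := μX) f
  -- scaling identities
  have hinner_smul : ∀ (c : ℝ) (v : EuclideanSpace ℝ (Fin d)) (x : 𝒳),
      ⟪c • v, Φ x⟫ = c * ⟪v, Φ x⟫ := fun c v x => real_inner_smul_left v (Φ x) c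
  have hA_smul : ∀ (c : ℝ) (v : EuclideanSpace ℝ (Fin d)),
      (∫ x, ⟪c • v, Φ x⟫ ^ 2 ∂μX) = c ^ 2 * ∫ x, ⟪v, Φ x⟫ ^ 2 ∂μX := by
    intro c v
    rw [← integral_const_mul]
    congr 1; funext x; rw [hinner_smul]; ring
  have hB_smul : ∀ (c : ℝ) (v : EuclideanSpace ℝ (Fin d)),
      (∫ x, r x * ⟪c • v, Φ x⟫ ∂μX) = c * ∫ x, r x * ⟪v, Φ x⟫ ∂μX := by
    intro c v
    rw [← integral_const_mul]
    congr 1; funext x; rw [hinner_smul]; ring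
  have habs_smul : ∀ (c : ℝ) (v : EuclideanSpace ℝ (Fin d)),
      (∫ x, |⟪c • v, Φ x⟫| ∂μX) = |c| * ∫ x, |⟪v, Φ x⟫| ∂μX := by
    intro c v
    rw [← integral_const_mul]
    congr 1; funext x; rw [hinner_smul, abs_mul]
  have hlmax0 : 0 < lmax := by
    have hAone : (∫ x, ⟪γ1, Φ x⟫ ^ 2 ∂μX) = 1 := by
      have : (fun x => ⟪γ1, Φ x⟫ ^ 2) = fun _ : 𝒳 => (1:ℝ) := by
        funext x; rw [hγ1]; norm_num
      rw [this]
      simp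
    have := hlmax γ1
    rw [hAone] at this
    nlinarith [sq_nonneg ‖γ1‖]
  -- unit-norm bounds, then scaled bounds
  have habs_le : ∀ v : EuclideanSpace ℝ (Fin d),
      (∫ x, |⟪v, Φ x⟫| ∂μX) ≤ (lmax + 1) / 2 * ‖v‖ := by
    intro v
    by_cases hv : v = 0
    · subst hv; simp [inner_zero_left]
    · have hn : 0 < ‖v‖ := norm_pos_iff.mpr hv
      have hu : v = ‖v‖ • ((‖v‖⁻¹ : ℝ) • v) := by
        rw [smul_smul, mul_inv_cancel₀ (ne_of_gt hn), one_smul]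
      set u : EuclideanSpace ℝ (Fin d) := (‖v‖⁻¹ : ℝ) • v with hu_def
      clear_value u
      have hun : ‖u‖ = 1 := by
        rw [hu_def, norm_smul, norm_inv, norm_norm, inv_mul_cancel₀ (ne_of_gt hn)]
      have h1 : (∫ x, |⟪u, Φ x⟫| ∂μX) ≤ (lmax + 1) / 2 := by
        have h2 : (∫ x, |⟪u, Φ x⟫| ∂μX) ≤ ∫ x, (⟪u, Φ x⟫ ^ 2 + 1) / 2 ∂μX := by
          refine integral_mono (habsInt u) (((hsqInt u).add (integrable_const 1)).div_const 2) ?_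
          intro x
          simp only []
          nlinarith [sq_nonneg (|⟪u, Φ x⟫| - 1), sq_abs ⟪u, Φ x⟫]
        have h3 : (∫ x, (⟪u, Φ x⟫ ^ 2 + 1) / 2 ∂μX) = ((∫ x, ⟪u, Φ x⟫ ^ 2 ∂μX) + 1) / 2 := by
          rw [integral_div, integral_add (hsqInt u) (integrable_const 1)]
          simp
        have h4 := hlmax u
        rw [hun] at h4
        rw [h3] at h2
        nlinarith
      calc (∫ x, |⟪v, Φ x⟫| ∂μX) = ‖v‖ * ∫ x, |⟪u, Φ x⟫| ∂μX := by
            conv_lhs => rw [hu]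
            rw [habs_smul, abs_of_pos hn]
        _ ≤ ‖v‖ * ((lmax + 1) / 2) := by
            exact mul_le_mul_of_nonneg_left h1 (le_of_lt hn)
        _ = (lmax + 1) / 2 * ‖v‖ := by ring
  have habs_ge : ∀ v : EuclideanSpace ℝ (Fin d), cindep * ‖v‖ ≤ ∫ x, |⟪v, Φ x⟫| ∂μX := by
    intro v
    by_cases hv : v = 0
    · subst hv; simp [inner_zero_left]
    · have hn : 0 < ‖v‖ := norm_pos_iff.mpr hv
      have hu : v = ‖v‖ • ((‖v‖⁻¹ : ℝ) • v) := by
        rw [smul_smul, mul_inv_cancel₀ (ne_of_gt hn), one_smul]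
      set u : EuclideanSpace ℝ (Fin d) := (‖v‖⁻¹ : ℝ) • v with hu_def
      clear_value u
      have hun : ‖u‖ = 1 := by
        rw [hu_def, norm_smul, norm_inv, norm_norm, inv_mul_cancel₀ (ne_of_gt hn)]
      have h1 := hindep u hun
      calc cindep * ‖v‖ = ‖v‖ * cindep := by ring
        _ ≤ ‖v‖ * ∫ x, |⟪u, Φ x⟫| ∂μX := mul_le_mul_of_nonneg_left h1 (le_of_lt hn)
        _ = ∫ x, |⟪v, Φ x⟫| ∂μX := by
            conv_rhs => rw [hu]
            rw [habs_smul, abs_of_pos hn]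
  have hrabsInt : ∀ v : EuclideanSpace ℝ (Fin d),
      Integrable (fun x => |r x * ⟪v, Φ x⟫|) μX := fun v => (hrInt v).abs
  have hB_le : ∀ v : EuclideanSpace ℝ (Fin d),
      |∫ x, r x * ⟪v, Φ x⟫ ∂μX| ≤ ((∫ x, r x ^ 2 ∂μX) + lmax) / 2 * ‖v‖ := by
    intro v
    by_cases hv : v = 0
    · subst hv; simp [inner_zero_left]
    · have hn : 0 < ‖v‖ := norm_pos_iff.mpr hv
      have hu : v = ‖v‖ • ((‖v‖⁻¹ : ℝ) • v) := by
        rw [smul_smul, mul_inv_cancel₀ (ne_of_gt hn), one_smul]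
      set u : EuclideanSpace ℝ (Fin d) := (‖v‖⁻¹ : ℝ) • v with hu_def
      clear_value u
      have hun : ‖u‖ = 1 := by
        rw [hu_def, norm_smul, norm_inv, norm_norm, inv_mul_cancel₀ (ne_of_gt hn)]
      have h1 : |∫ x, r x * ⟪u, Φ x⟫ ∂μX| ≤ ((∫ x, r x ^ 2 ∂μX) + lmax) / 2 := by
        have h2 : |∫ x, r x * ⟪u, Φ x⟫ ∂μX| ≤ ∫ x, |r x * ⟪u, Φ x⟫| ∂μX :=
          habsint _
        have h3 : (∫ x, |r x * ⟪u, Φ x⟫| ∂μX) ≤ ∫ x, (r x ^ 2 + ⟪u, Φ x⟫ ^ 2) / 2 ∂μX := by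
          refine integral_mono (hrabsInt u) ((hr2.add (hsqInt u)).div_const 2) ?_
          intro x
          simp only []
          rw [abs_mul]
          nlinarith [sq_nonneg (|r x| - |⟪u, Φ x⟫|), sq_abs (r x), sq_abs ⟪u, Φ x⟫]
        have h4 : (∫ x, (r x ^ 2 + ⟪u, Φ x⟫ ^ 2) / 2 ∂μX)
            = ((∫ x, r x ^ 2 ∂μX) + ∫ x, ⟪u, Φ x⟫ ^ 2 ∂μX) / 2 := by
          rw [integral_div, integral_add hr2 (hsqInt u)]
        have h5 := hlmax u
        rw [hun] at h5
        rw [h4] at h3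
        nlinarith
      calc |∫ x, r x * ⟪v, Φ x⟫ ∂μX| = ‖v‖ * |∫ x, r x * ⟪u, Φ x⟫ ∂μX| := by
            conv_lhs => rw [hu]
            rw [hB_smul, abs_mul, abs_of_pos hn]
        _ ≤ ‖v‖ * (((∫ x, r x ^ 2 ∂μX) + lmax) / 2) :=
            mul_le_mul_of_nonneg_left h1 (le_of_lt hn)
        _ = ((∫ x, r x ^ 2 ∂μX) + lmax) / 2 * ‖v‖ := by ring
  have hQ_smul : ∀ (c : ℝ) (v w : EuclideanSpace ℝ (Fin d)),
      (∫ x, ⟪c • v, Φ x⟫ * ⟪w, Φ x⟫ ∂μX) = c * ∫ x, ⟪v, Φ x⟫ * ⟪w, Φ x⟫ ∂μX := by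
    intro c v w
    rw [← integral_const_mul]
    congr 1; funext x; rw [hinner_smul]; ring
  have hQ_comm : ∀ (v w : EuclideanSpace ℝ (Fin d)),
      (∫ x, ⟪v, Φ x⟫ * ⟪w, Φ x⟫ ∂μX) = ∫ x, ⟪w, Φ x⟫ * ⟪v, Φ x⟫ ∂μX := by
    intro v w; congr 1; funext x; ring
  have hQ_le : ∀ v w : EuclideanSpace ℝ (Fin d),
      |∫ x, ⟪v, Φ x⟫ * ⟪w, Φ x⟫ ∂μX| ≤ lmax * ‖v‖ * ‖w‖ := by
    have key : ∀ v w : EuclideanSpace ℝ (Fin d), ‖v‖ = 1 → ‖w‖ = 1 →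
        |∫ x, ⟪v, Φ x⟫ * ⟪w, Φ x⟫ ∂μX| ≤ lmax := by
      intro v w hvn hwn
      have h2 : |∫ x, ⟪v, Φ x⟫ * ⟪w, Φ x⟫ ∂μX| ≤ ∫ x, |⟪v, Φ x⟫ * ⟪w, Φ x⟫| ∂μX :=
        habsint _
      have h3 : (∫ x, |⟪v, Φ x⟫ * ⟪w, Φ x⟫| ∂μX)
          ≤ ∫ x, (⟪v, Φ x⟫ ^ 2 + ⟪w, Φ x⟫ ^ 2) / 2 ∂μX := by
        refine integral_mono (hmulInt v w).abs (((hsqInt v).add (hsqInt w)).div_const 2) ?_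
        intro x
        simp only []
        rw [abs_mul]
        nlinarith [sq_nonneg (|⟪v, Φ x⟫| - |⟪w, Φ x⟫|), sq_abs ⟪v, Φ x⟫, sq_abs ⟪w, Φ x⟫]
      have h4 : (∫ x, (⟪v, Φ x⟫ ^ 2 + ⟪w, Φ x⟫ ^ 2) / 2 ∂μX)
          = ((∫ x, ⟪v, Φ x⟫ ^ 2 ∂μX) + ∫ x, ⟪w, Φ x⟫ ^ 2 ∂μX) / 2 := by
        rw [integral_div, integral_add (hsqInt v) (hsqInt w)]
      have h5 := hlmax v; have h6 := hlmax w
      rw [hvn] at h5; rw [hwn] at h6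
      rw [h4] at h3
      nlinarith
    intro v w
    by_cases hv : v = 0
    · subst hv; simp [inner_zero_left]
    by_cases hw : w = 0
    · subst hw; simp [inner_zero_left]
    have hnv : 0 < ‖v‖ := norm_pos_iff.mpr hv
    have hnw : 0 < ‖w‖ := norm_pos_iff.mpr hw
    have huv : v = ‖v‖ • ((‖v‖⁻¹ : ℝ) • v) := by
      rw [smul_smul, mul_inv_cancel₀ (ne_of_gt hnv), one_smul]
    have huw : w = ‖w‖ • ((‖w‖⁻¹ : ℝ) • w) := by
      rw [smul_smul, mul_inv_cancel₀ (ne_of_gt hnw), one_smul]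
    set uv : EuclideanSpace ℝ (Fin d) := (‖v‖⁻¹ : ℝ) • v
    set uw : EuclideanSpace ℝ (Fin d) := (‖w‖⁻¹ : ℝ) • w
    have hunv : ‖uv‖ = 1 := by
      rw [norm_smul, norm_inv, norm_norm, inv_mul_cancel₀ (ne_of_gt hnv)]
    have hunw : ‖uw‖ = 1 := by
      rw [norm_smul, norm_inv, norm_norm, inv_mul_cancel₀ (ne_of_gt hnw)]
    clear_value uv uw
    have : (∫ x, ⟪v, Φ x⟫ * ⟪w, Φ x⟫ ∂μX) = ‖v‖ * (‖w‖ * ∫ x, ⟪uv, Φ x⟫ * ⟪uw, Φ x⟫ ∂μX) := by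
      conv_lhs => rw [huv, huw]
      rw [hQ_smul, hQ_comm, hQ_smul, hQ_comm]
    rw [this]
    rw [abs_mul, abs_mul, abs_of_pos hnv, abs_of_pos hnw]
    calc ‖v‖ * (‖w‖ * |∫ x, ⟪uv, Φ x⟫ * ⟪uw, Φ x⟫ ∂μX|) ≤ ‖v‖ * (‖w‖ * lmax) := by
          refine mul_le_mul_of_nonneg_left (mul_le_mul_of_nonneg_left ?_ (le_of_lt hnw)) (le_of_lt hnv)
          exact key uv uw hunv hunw
      _ = lmax * ‖v‖ * ‖w‖ := by ring
  -- transfer between P and μX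
  have hα1 : α ≤ 1 := by linarith
  have hα0' : 0 ≤ α := le_of_lt hα0
  have hPfst : P.map Prod.fst = μX := by
    rw [hP]
    exact Measure.fst_compProd μX κ
  have hIntFst : ∀ {g : 𝒳 → ℝ}, Integrable g μX → Integrable (fun p : 𝒳 × ℝ => g p.1) P := by
    intro g hg
    have h1 : Integrable g (P.map Prod.fst) := hPfst ▸ hg
    exact (integrable_map_measure (hPfst ▸ hg.aestronglyMeasurable)
      measurable_fst.aemeasurable).mp h1
  have hIntegralFst : ∀ {g : 𝒳 → ℝ}, AEStronglyMeasurable g μX →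
      (∫ p, g p.1 ∂P) = ∫ x, g x ∂μX := by
    intro g hg
    have := integral_map (μ := P) measurable_fst.aemeasurable (hPfst ▸ hg)
    rw [hPfst] at this
    exact this.symm
  have hs01ae : ∀ᵐ p ∂P, p.2 ∈ Icc (0:ℝ) 1 := by
    have hmeas : MeasurableSet {p : 𝒳 × ℝ | p.2 ∈ Icc (0:ℝ) 1} :=
      measurable_snd measurableSet_Icc
    rw [ae_iff]
    have hcompl : {p : 𝒳 × ℝ | ¬ p.2 ∈ Icc (0:ℝ) 1} = Prod.snd ⁻¹' (Icc (0:ℝ) 1)ᶜ := rfl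
    rw [hcompl, hP, Measure.compProd_apply (measurable_snd measurableSet_Icc.compl)]
    have hz : ∀ x, (κ x) ((Prod.mk x ⁻¹' (Prod.snd ⁻¹' (Icc (0:ℝ) 1)))ᶜ) = 0 := by
      intro x
      have h1 : Prod.mk x ⁻¹' (Prod.snd ⁻¹' (Icc (0:ℝ) 1)) = Icc (0:ℝ) 1 := rfl
      rw [h1, measure_compl measurableSet_Icc (measure_ne_top _ _), hS01 x]
      simp
    simp only [Set.preimage_compl]
    simp [hz]
  -- integrability of the pinball integrand
  have hpinmeas : ∀ v : EuclideanSpace ℝ (Fin d),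
      Measurable fun p : 𝒳 × ℝ => pinball α ⟪v, Φ p.1⟫ p.2 := by
    intro v
    exact measurable_pinball.comp (((hmeasI v).comp measurable_fst).prodMk measurable_snd)
  have hGint : ∀ v : EuclideanSpace ℝ (Fin d),
      Integrable (fun p : 𝒳 × ℝ => pinball α ⟪v, Φ p.1⟫ p.2) P := by
    intro v
    refine Integrable.mono' ((hIntFst (habsInt v)).add (integrable_const 1))
      (hpinmeas v).aestronglyMeasurable ?_
    filter_upwards [hs01ae] with p hp
    simp only [Pi.add_apply]
    rw [Real.norm_eq_abs, abs_of_nonneg (pinball_nonneg hα0' hα1 _ _)]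
    have h1 := pinball_le_abs hα0' hα1 ⟪v, Φ p.1⟫ p.2
    have h2 : |⟪v, Φ p.1⟫ - p.2| ≤ |⟪v, Φ p.1⟫| + |p.2| := abs_sub _ _
    have h3 : |p.2| ≤ 1 := abs_le.mpr ⟨by linarith [hp.1], hp.2⟩
    linarith
  -- nonnegativity and coercivity of G
  have hGnonneg : ∀ v : EuclideanSpace ℝ (Fin d),
      0 ≤ ∫ p, pinball α ⟪v, Φ p.1⟫ p.2 ∂P :=
    fun v => integral_nonneg fun p => pinball_nonneg hα0' hα1 _ _
  have habsIntP : ∀ v : EuclideanSpace ℝ (Fin d),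
      Integrable (fun p : 𝒳 × ℝ => |⟪v, Φ p.1⟫|) P := fun v => hIntFst (habsInt v)
  have hGlip : ∀ v w : EuclideanSpace ℝ (Fin d),
      |(∫ p, pinball α ⟪v, Φ p.1⟫ p.2 ∂P) - ∫ p, pinball α ⟪w, Φ p.1⟫ p.2 ∂P|
        ≤ (lmax + 1) / 2 * ‖v - w‖ := by
    intro v w
    have hkey : ∀ a b : EuclideanSpace ℝ (Fin d),
        (∫ p, pinball α ⟪a, Φ p.1⟫ p.2 ∂P) - (∫ p, pinball α ⟪b, Φ p.1⟫ p.2 ∂P)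
          ≤ ∫ p, |⟪a - b, Φ p.1⟫| ∂P := by
      intro a b
      have h1 : (∫ p, pinball α ⟪a, Φ p.1⟫ p.2 ∂P)
          ≤ ∫ p, (pinball α ⟪b, Φ p.1⟫ p.2 + |⟪a - b, Φ p.1⟫|) ∂P := by
        refine integral_mono (hGint a) ((hGint b).add (habsIntP (a - b))) ?_
        intro p
        have := pinball_lip hα0' hα1 ⟪a, Φ p.1⟫ ⟪b, Φ p.1⟫ p.2
        have h2 : ⟪a, Φ p.1⟫ - ⟪b, Φ p.1⟫ = ⟪a - b, Φ p.1⟫ := (inner_sub_left _ _ _).symm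
        simp only []
        rw [← h2]
        exact this
      rw [integral_add (hGint b) (habsIntP (a - b))] at h1
      linarith
    have habs : ∀ a b : EuclideanSpace ℝ (Fin d),
        (∫ p, |⟪a - b, Φ p.1⟫| ∂P) ≤ (lmax + 1) / 2 * ‖a - b‖ := by
      intro a b
      rw [hIntegralFst (habsInt (a - b)).aestronglyMeasurable]
      exact habs_le (a - b)
    rw [abs_sub_le_iff]
    constructor
    · exact le_trans (hkey v w) (habs v w)
    · have := le_trans (hkey w v) (habs w v)
      rwa [show ‖w - v‖ = ‖v - w‖ from norm_sub_rev w v] at this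
  have hGcont : Continuous fun v : EuclideanSpace ℝ (Fin d) =>
      ∫ p, pinball α ⟪v, Φ p.1⟫ p.2 ∂P := by
    have hCa : (0:ℝ) ≤ (lmax + 1) / 2 := by linarith
    refine (LipschitzWith.of_dist_le_mul (K := Real.toNNReal ((lmax + 1) / 2)) ?_).continuous
    intro v w
    rw [Real.dist_eq, dist_eq_norm, Real.coe_toNNReal _ hCa]
    exact hGlip v w
  have hGcoer : ∀ v : EuclideanSpace ℝ (Fin d),
      α * (cindep * ‖v‖ - 1) ≤ ∫ p, pinball α ⟪v, Φ p.1⟫ p.2 ∂P := by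
    intro v
    have hdiffInt : Integrable (fun p : 𝒳 × ℝ => |⟪v, Φ p.1⟫ - p.2|) P := by
      refine Integrable.mono' ((habsIntP v).add (integrable_const 1))
        ((((hmeasI v).comp measurable_fst).sub measurable_snd).abs).aestronglyMeasurable ?_
      filter_upwards [hs01ae] with p hp
      simp only [Pi.add_apply]
      rw [Real.norm_eq_abs, abs_abs]
      have h2 : |⟪v, Φ p.1⟫ - p.2| ≤ |⟪v, Φ p.1⟫| + |p.2| := abs_sub _ _
      have h3 : |p.2| ≤ 1 := abs_le.mpr ⟨by linarith [hp.1], hp.2⟩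
      linarith
    have step1 : α * ∫ p, |⟪v, Φ p.1⟫ - p.2| ∂P ≤ ∫ p, pinball α ⟪v, Φ p.1⟫ p.2 ∂P := by
      rw [← integral_const_mul]
      refine integral_mono (hdiffInt.const_mul α) (hGint v) ?_
      intro p
      exact alpha_abs_le_pinball hα0' hα _ _
    have step2 : (∫ p, |⟪v, Φ p.1⟫| ∂P) ≤ (∫ p, |⟪v, Φ p.1⟫ - p.2| ∂P) + 1 := by
      have h1 : (∫ p, |⟪v, Φ p.1⟫| ∂P) ≤ ∫ p, (|⟪v, Φ p.1⟫ - p.2| + 1) ∂P := by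
        refine integral_mono_ae (habsIntP v) (hdiffInt.add (integrable_const 1)) ?_
        filter_upwards [hs01ae] with p hp
        have h3 : |p.2| ≤ 1 := abs_le.mpr ⟨by linarith [hp.1], hp.2⟩
        have h4 : |⟪v, Φ p.1⟫| ≤ |⟪v, Φ p.1⟫ - p.2| + |p.2| := by
          calc |⟪v, Φ p.1⟫| = |(⟪v, Φ p.1⟫ - p.2) + p.2| := by ring_nf
            _ ≤ |⟪v, Φ p.1⟫ - p.2| + |p.2| := abs_add_le _ _
        linarith
      rw [integral_add hdiffInt (integrable_const 1)] at h1
      simpa using h1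
    have step3 : cindep * ‖v‖ ≤ ∫ p, |⟪v, Φ p.1⟫| ∂P := by
      rw [hIntegralFst (habsInt v).aestronglyMeasurable]
      exact habs_ge v
    nlinarith [hα0]
  -- continuity of A and B
  have hBsub : ∀ v w : EuclideanSpace ℝ (Fin d),
      (∫ x, r x * ⟪v, Φ x⟫ ∂μX) - (∫ x, r x * ⟪w, Φ x⟫ ∂μX)
        = ∫ x, r x * ⟪v - w, Φ x⟫ ∂μX := by
    intro v w
    rw [← integral_sub (hrInt v) (hrInt w)]
    congr 1; funext x; rw [inner_sub_left]; ring
  have hBcont : Continuous fun v : EuclideanSpace ℝ (Fin d) => ∫ x, r x * ⟪v, Φ x⟫ ∂μX := by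
    have hCb : (0:ℝ) ≤ ((∫ x, r x ^ 2 ∂μX) + lmax) / 2 := by
      have : (0:ℝ) ≤ ∫ x, r x ^ 2 ∂μX := integral_nonneg fun x => sq_nonneg _
      linarith
    refine (LipschitzWith.of_dist_le_mul
      (K := Real.toNNReal (((∫ x, r x ^ 2 ∂μX) + lmax) / 2)) ?_).continuous
    intro v w
    rw [Real.dist_eq, dist_eq_norm, Real.coe_toNNReal _ hCb, hBsub v w]
    exact hB_le (v - w)
  have hAdiff : ∀ v w : EuclideanSpace ℝ (Fin d),
      (∫ x, ⟪v, Φ x⟫ ^ 2 ∂μX) - (∫ x, ⟪w, Φ x⟫ ^ 2 ∂μX)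
        = ∫ x, ⟪v - w, Φ x⟫ * ⟪v + w, Φ x⟫ ∂μX := by
    intro v w
    rw [← integral_sub (hsqInt v) (hsqInt w)]
    congr 1; funext x; rw [inner_sub_left, inner_add_left]; ring
  have hAcont : Continuous fun v : EuclideanSpace ℝ (Fin d) => ∫ x, ⟪v, Φ x⟫ ^ 2 ∂μX := by
    rw [continuous_iff_continuousAt]
    intro v0
    rw [Metric.continuousAt_iff]
    intro ε hε
    refine ⟨min 1 (ε / (lmax * (1 + 2 * ‖v0‖) + 1)), by positivity, ?_⟩
    intro v hv
    rw [Real.dist_eq, hAdiff v v0]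
    have hd : dist v v0 = ‖v - v0‖ := dist_eq_norm v v0
    have h2 := hQ_le (v - v0) (v + v0)
    have h3 : ‖v + v0‖ ≤ ‖v - v0‖ + 2 * ‖v0‖ := by
      calc ‖v + v0‖ = ‖(v - v0) + v0 + v0‖ := by
            congr 1
            abel
        _ ≤ ‖(v - v0) + v0‖ + ‖v0‖ := norm_add_le _ _
        _ ≤ ‖v - v0‖ + ‖v0‖ + ‖v0‖ := by
            have := norm_add_le (v - v0) v0
            linarith
        _ = ‖v - v0‖ + 2 * ‖v0‖ := by ring
    rw [hd] at hv
    have hlt1 : ‖v - v0‖ < 1 := lt_of_lt_of_le hv (min_le_left _ _)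
    have hlt2 : ‖v - v0‖ < ε / (lmax * (1 + 2 * ‖v0‖) + 1) := lt_of_lt_of_le hv (min_le_right _ _)
    have hL : 0 < lmax * (1 + 2 * ‖v0‖) + 1 := by nlinarith [norm_nonneg v0]
    have h5 : ‖v - v0‖ * (lmax * (1 + 2 * ‖v0‖) + 1) < ε := by
      rw [div_eq_mul_inv] at hlt2
      calc ‖v - v0‖ * (lmax * (1 + 2 * ‖v0‖) + 1)
          < ε * (lmax * (1 + 2 * ‖v0‖) + 1)⁻¹ * (lmax * (1 + 2 * ‖v0‖) + 1) := by
            exact mul_lt_mul_of_pos_right hlt2 hL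
        _ = ε := by field_simp
    have e0 : ‖v + v0‖ ≤ 1 + 2 * ‖v0‖ := by linarith
    have e1 : lmax * ‖v - v0‖ * ‖v + v0‖ ≤ lmax * ‖v - v0‖ * (1 + 2 * ‖v0‖) :=
      mul_le_mul_of_nonneg_left e0 (by positivity)
    nlinarith [norm_nonneg (v - v0)]
  -- the max-part integrability and Fubini bound
  have hmaxmeas : ∀ w : EuclideanSpace ℝ (Fin d),
      Measurable fun p : 𝒳 × ℝ => max (⟪w, Φ p.1⟫ - p.2) 0 :=
    fun w => (((hmeasI w).comp measurable_fst).sub measurable_snd).max measurable_const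
  have hmaxInt : ∀ w : EuclideanSpace ℝ (Fin d),
      Integrable (fun p : 𝒳 × ℝ => max (⟪w, Φ p.1⟫ - p.2) 0) P := by
    intro w
    refine Integrable.mono' ((habsIntP w).add (integrable_const 1))
      (hmaxmeas w).aestronglyMeasurable ?_
    filter_upwards [hs01ae] with p hp
    simp only [Pi.add_apply]
    rw [Real.norm_eq_abs, abs_of_nonneg (le_max_right _ _)]
    have h3 : |p.2| ≤ 1 := abs_le.mpr ⟨by linarith [hp.1], hp.2⟩
    have h4 : max (⟪w, Φ p.1⟫ - p.2) 0 ≤ |⟪w, Φ p.1⟫ - p.2| :=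
      max_le (le_abs_self _) (abs_nonneg _)
    have h5 : |⟪w, Φ p.1⟫ - p.2| ≤ |⟪w, Φ p.1⟫| + |p.2| := abs_sub _ _
    linarith
  have hcompl0 : ∀ x, κ x ((Icc (0:ℝ) 1)ᶜ) = 0 := by
    intro x
    rw [measure_compl measurableSet_Icc (measure_ne_top _ _), hS01 x]
    simp
  have hMax : ∀ w : EuclideanSpace ℝ (Fin d),
      (∫ p, max (⟪w, Φ p.1⟫ - p.2) 0 ∂P) ≤ Cf * ∫ x, ⟪w, Φ x⟫ ^ 2 ∂μX := by
    intro w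
    have hAnn : (0:ℝ) ≤ ∫ x, ⟪w, Φ x⟫ ^ 2 ∂μX := integral_nonneg fun x => sq_nonneg _
    have hgm : Measurable fun p : 𝒳 × ℝ => ENNReal.ofReal (max (⟪w, Φ p.1⟫ - p.2) 0) :=
      ENNReal.measurable_ofReal.comp (hmaxmeas w)
    have hinner : ∀ x, (∫⁻ s, ENNReal.ofReal (max (⟪w, Φ x⟫ - s) 0) ∂κ x)
        ≤ ENNReal.ofReal (Cf * ⟪w, Φ x⟫ ^ 2) := by
      intro x
      set c := ⟪w, Φ x⟫ with hc
      have haeK : ∀ᵐ s ∂κ x, s ∈ Icc (0:ℝ) 1 := by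
        rw [ae_iff]
        have h1 : {s : ℝ | ¬ s ∈ Icc (0:ℝ) 1} = (Icc (0:ℝ) 1)ᶜ := rfl
        rw [h1, hcompl0 x]
      have hbound : ∀ᵐ s ∂κ x, ENNReal.ofReal (max (c - s) 0)
          ≤ (Iio c).indicator (fun _ => ENNReal.ofReal c) s := by
        filter_upwards [haeK] with s hs
        by_cases hsc : s < c
        · rw [Set.indicator_of_mem (mem_Iio.mpr hsc)]
          apply ENNReal.ofReal_le_ofReal
          exact max_le (by linarith [hs.1]) (by linarith [hs.1])
        · rw [Set.indicator_of_notMem (fun h => hsc (mem_Iio.mp h))]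
          have : max (c - s) 0 = 0 := max_eq_right (by linarith [not_lt.mp hsc])
          rw [this]
          simp
      have hstep : (∫⁻ s, ENNReal.ofReal (max (c - s) 0) ∂κ x)
          ≤ ENNReal.ofReal c * (κ x) (Iio c) := by
        calc (∫⁻ s, ENNReal.ofReal (max (c - s) 0) ∂κ x)
            ≤ ∫⁻ s, (Iio c).indicator (fun _ => ENNReal.ofReal c) s ∂κ x :=
              lintegral_mono_ae hbound
          _ = ENNReal.ofReal c * (κ x) (Iio c) := by
              rw [lintegral_indicator measurableSet_Iio]
              simp [Measure.restrict_apply]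
      rcases le_or_gt c 0 with hc0 | hc0
      · have : ENNReal.ofReal c = 0 := ENNReal.ofReal_eq_zero.mpr hc0
        rw [this, zero_mul] at hstep
        exact le_trans hstep zero_le
      · have hIio : (κ x) (Iio c) ≤ ENNReal.ofReal (Cf * c) := by
          have hsub : Iio c ⊆ Iio (0:ℝ) ∪ Ico 0 c := by
            intro s hs
            rcases lt_or_ge s 0 with h | h
            · exact Or.inl h
            · exact Or.inr ⟨h, hs⟩
          have h0 : (κ x) (Iio (0:ℝ)) = 0 := by
            refine measure_mono_null ?_ (hcompl0 x)
            intro s hs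
            simp only [mem_compl_iff, mem_Icc, not_and_or, not_le]
            exact Or.inl hs
          have hIco : (κ x) (Ico (0:ℝ) c) ≤ ENNReal.ofReal Cf * ENNReal.ofReal c := by
            rw [hdens x, withDensity_apply _ measurableSet_Ico]
            calc (∫⁻ s in Ico (0:ℝ) c, ENNReal.ofReal (fdens x s) ∂volume)
                ≤ ∫⁻ _ in Ico (0:ℝ) c, ENNReal.ofReal Cf ∂volume := by
                  refine lintegral_mono fun s => ENNReal.ofReal_le_ofReal (hdens_bdd x s)
              _ = ENNReal.ofReal Cf * volume (Ico (0:ℝ) c) := by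
                  rw [setLIntegral_const]
              _ = ENNReal.ofReal Cf * ENNReal.ofReal c := by
                  rw [Real.volume_Ico]
                  norm_num
          calc (κ x) (Iio c) ≤ (κ x) (Iio (0:ℝ) ∪ Ico 0 c) := measure_mono hsub
            _ ≤ (κ x) (Iio (0:ℝ)) + (κ x) (Ico 0 c) := measure_union_le _ _
            _ ≤ ENNReal.ofReal Cf * ENNReal.ofReal c := by rw [h0, zero_add]; exact hIco
            _ = ENNReal.ofReal (Cf * c) := by
                rw [ENNReal.ofReal_mul hCf]
        calc (∫⁻ s, ENNReal.ofReal (max (c - s) 0) ∂κ x)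
            ≤ ENNReal.ofReal c * (κ x) (Iio c) := hstep
          _ ≤ ENNReal.ofReal c * ENNReal.ofReal (Cf * c) :=
              mul_le_mul_right hIio _
          _ = ENNReal.ofReal (Cf * c ^ 2) := by
              rw [← ENNReal.ofReal_mul (le_of_lt hc0)]
              congr 1
              ring
    have houter : (∫⁻ p, ENNReal.ofReal (max (⟪w, Φ p.1⟫ - p.2) 0) ∂P)
        ≤ ENNReal.ofReal (Cf * ∫ x, ⟪w, Φ x⟫ ^ 2 ∂μX) := by
      rw [hP, Measure.lintegral_compProd hgm]
      calc (∫⁻ x, ∫⁻ s, ENNReal.ofReal (max (⟪w, Φ x⟫ - s) 0) ∂κ x ∂μX)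
          ≤ ∫⁻ x, ENNReal.ofReal (Cf * ⟪w, Φ x⟫ ^ 2) ∂μX := lintegral_mono hinner
        _ = ENNReal.ofReal (∫ x, Cf * ⟪w, Φ x⟫ ^ 2 ∂μX) := by
            rw [← ofReal_integral_eq_lintegral_ofReal ((hsqInt w).const_mul Cf)
              (ae_of_all _ fun x => mul_nonneg hCf (sq_nonneg _))]
        _ = ENNReal.ofReal (Cf * ∫ x, ⟪w, Φ x⟫ ^ 2 ∂μX) := by
            rw [integral_const_mul]
    have h0 : 0 ≤ᵐ[P] fun p : 𝒳 × ℝ => max (⟪w, Φ p.1⟫ - p.2) 0 :=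
      ae_of_all _ fun p => le_max_right _ _
    rw [integral_eq_lintegral_of_nonneg_ae h0 (hmaxInt w).aestronglyMeasurable]
    have := ENNReal.toReal_mono ENNReal.ofReal_ne_top houter
    rwa [ENNReal.toReal_ofReal (mul_nonneg hCf hAnn)] at this
  -- G decomposition and upper bound near 0
  have hIntvP : ∀ w : EuclideanSpace ℝ (Fin d),
      Integrable (fun p : 𝒳 × ℝ => ⟪w, Φ p.1⟫) P := fun w => hIntFst (hIntv w)
  have hGint0 : Integrable (fun p : 𝒳 × ℝ => pinball α (0:ℝ) p.2) P := by
    have := hGint 0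
    simpa only [inner_zero_left] using this
  have hGdecomp : ∀ w : EuclideanSpace ℝ (Fin d),
      (∫ p, pinball α ⟪w, Φ p.1⟫ p.2 ∂P)
        = (∫ p, pinball α (0:ℝ) p.2 ∂P) - (1 - α) * (∫ x, ⟪w, Φ x⟫ ∂μX)
          + ∫ p, max (⟪w, Φ p.1⟫ - p.2) 0 ∂P := by
    intro w
    have hae : (fun p : 𝒳 × ℝ => pinball α ⟪w, Φ p.1⟫ p.2) =ᵐ[P]
        fun p => (pinball α (0:ℝ) p.2 - (1 - α) * ⟪w, Φ p.1⟫) + max (⟪w, Φ p.1⟫ - p.2) 0 := by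
      filter_upwards [hs01ae] with p hp
      have := pinball_decomp (α := α) ⟪w, Φ p.1⟫ p.2 hp.1
      linarith
    have hInt1 : Integrable (fun p : 𝒳 × ℝ =>
        pinball α (0:ℝ) p.2 - (1 - α) * ⟪w, Φ p.1⟫) P :=
      hGint0.sub ((hIntvP w).const_mul (1 - α))
    rw [integral_congr_ae hae, integral_add hInt1 (hmaxInt w),
      integral_sub hGint0 ((hIntvP w).const_mul (1 - α)),
      integral_const_mul, hIntegralFst (hIntv w).aestronglyMeasurable]
  have hGupper : ∀ w : EuclideanSpace ℝ (Fin d),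
      (∫ p, pinball α ⟪w, Φ p.1⟫ p.2 ∂P)
        ≤ (∫ p, pinball α (0:ℝ) p.2 ∂P) - (1 - α) * (∫ x, ⟪w, Φ x⟫ ∂μX)
          + Cf * ∫ x, ⟪w, Φ x⟫ ^ 2 ∂μX := by
    intro w
    rw [hGdecomp w]
    have := hMax w
    linarith
  -- more smul identities and expansion lemmas
  have hI_smul : ∀ (c : ℝ) (v : EuclideanSpace ℝ (Fin d)),
      (∫ x, ⟪c • v, Φ x⟫ ∂μX) = c * ∫ x, ⟪v, Φ x⟫ ∂μX := by
    intro c v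
    rw [← integral_const_mul]
    congr 1; funext x; rw [hinner_smul]
  have hrIntg : Integrable r μX := by
    refine Integrable.mono' (hr2.add (integrable_const 1)) hrmeas.aestronglyMeasurable ?_
    filter_upwards with x
    simp only [Pi.add_apply, Real.norm_eq_abs]
    nlinarith [sq_nonneg (|r x| - 1), sq_abs (r x), abs_nonneg (r x)]
  have hA_exp : ∀ (θ : EuclideanSpace ℝ (Fin d)) (s : ℝ),
      (∫ x, ⟪θ + s • γ1, Φ x⟫ ^ 2 ∂μX)
        = (∫ x, ⟪θ, Φ x⟫ ^ 2 ∂μX) + (2 * s * (∫ x, ⟪θ, Φ x⟫ ∂μX) + s ^ 2) := by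
    intro θ s
    calc (∫ x, ⟪θ + s • γ1, Φ x⟫ ^ 2 ∂μX)
        = ∫ x, (⟪θ, Φ x⟫ ^ 2 + (2 * s * ⟪θ, Φ x⟫ + s ^ 2)) ∂μX := by
          congr 1; funext x
          rw [inner_add_left, hinner_smul, hγ1]
          ring
      _ = (∫ x, ⟪θ, Φ x⟫ ^ 2 ∂μX) + ∫ x, (2 * s * ⟪θ, Φ x⟫ + s ^ 2) ∂μX :=
          integral_add (hsqInt θ) (((hIntv θ).const_mul (2 * s)).add (integrable_const _))
      _ = (∫ x, ⟪θ, Φ x⟫ ^ 2 ∂μX) + (2 * s * (∫ x, ⟪θ, Φ x⟫ ∂μX) + s ^ 2) := by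
          rw [integral_add ((hIntv θ).const_mul (2 * s)) (integrable_const _),
            integral_const_mul, integral_const]
          simp
  have hB_exp : ∀ (θ : EuclideanSpace ℝ (Fin d)) (s : ℝ),
      (∫ x, r x * ⟪θ + s • γ1, Φ x⟫ ∂μX) = (∫ x, r x * ⟪θ, Φ x⟫ ∂μX) + s := by
    intro θ s
    calc (∫ x, r x * ⟪θ + s • γ1, Φ x⟫ ∂μX)
        = ∫ x, (r x * ⟪θ, Φ x⟫ + s * r x) ∂μX := by
          congr 1; funext x
          rw [inner_add_left, hinner_smul, hγ1]
          ring
      _ = (∫ x, r x * ⟪θ, Φ x⟫ ∂μX) + ∫ x, s * r x ∂μX :=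
          integral_add (hrInt θ) (hrIntg.const_mul s)
      _ = (∫ x, r x * ⟪θ, Φ x⟫ ∂μX) + s := by
          rw [integral_const_mul, hrmean, mul_one]
  -- constants
  set G0 : ℝ := ∫ p, pinball α (0:ℝ) p.2 ∂P with hG0def
  have hG0nonneg : 0 ≤ G0 :=
    integral_nonneg fun p => pinball_nonneg hα0' hα1 _ _
  have hG0eq : (∫ p, pinball α ⟪(0 : EuclideanSpace ℝ (Fin d)), Φ p.1⟫ p.2 ∂P) = G0 := by
    rw [hG0def]
    congr 1; funext p; rw [inner_zero_left]
  have hR2nn : (0:ℝ) ≤ ∫ x, r x ^ 2 ∂μX := integral_nonneg fun x => sq_nonneg _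
  set Cb : ℝ := ((∫ x, r x ^ 2 ∂μX) + lmax) / 2 with hCbdef
  have hCbnn : 0 ≤ Cb := by rw [hCbdef]; linarith
  -- the objective on pairs
  set F : (EuclideanSpace ℝ (Fin d)) × (EuclideanSpace ℝ (Fin d)) → ℝ :=
    fun q => (∫ p, pinball α ⟪q.1, Φ p.1⟫ p.2 ∂P)
      + lam * ((∫ x, ⟪q.2, Φ x⟫ ^ 2 ∂μX) - 2 * ∫ x, r x * ⟪q.2, Φ x⟫ ∂μX) with hFdef
  have hpop : ∀ (γ : EuclideanSpace ℝ (Fin d)) (β : ℝ),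
      popLoss Φ P μX r α lam γ β = F (γ, β • γ) := by
    intro γ β
    simp only [popLoss, hFdef]
    rw [hA_smul, hB_smul]
    ring
  have hFcont : Continuous F := by
    rw [hFdef]
    exact (hGcont.comp continuous_fst).add (continuous_const.mul
      ((hAcont.comp continuous_snd).sub (continuous_const.mul (hBcont.comp continuous_snd))))
  -- the collinearity constraint set
  set C : Set ((EuclideanSpace ℝ (Fin d)) × (EuclideanSpace ℝ (Fin d))) :=
    {q | ∀ i j : Fin d, q.1 i * q.2 j = q.1 j * q.2 i} with hCdef
  have hcoord : ∀ i : Fin d, Continuous fun v : EuclideanSpace ℝ (Fin d) => v i :=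
    fun i => (EuclideanSpace.proj i).continuous
  have hCclosed : IsClosed C := by
    have hCeq : C = ⋂ (i : Fin d) (j : Fin d),
        {q : (EuclideanSpace ℝ (Fin d)) × (EuclideanSpace ℝ (Fin d)) |
          q.1 i * q.2 j = q.1 j * q.2 i} := by
      ext q; simp [hCdef]
    rw [hCeq]
    refine isClosed_iInter fun i => isClosed_iInter fun j => isClosed_eq ?_ ?_
    · exact (((hcoord i).comp continuous_fst).mul ((hcoord j).comp continuous_snd))
    · exact (((hcoord j).comp continuous_fst).mul ((hcoord i).comp continuous_snd))
  have hCsmul : ∀ (γ : EuclideanSpace ℝ (Fin d)) (β : ℝ), (γ, β • γ) ∈ C := by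
    intro γ β
    intro i j
    show γ i * (β • γ) j = γ j * (β • γ) i
    have h1 : (β • γ) j = β * γ j := rfl
    have h2 : (β • γ) i = β * γ i := rfl
    rw [h1, h2]; ring
  have hCzero : ∀ θ : EuclideanSpace ℝ (Fin d), ((0 : EuclideanSpace ℝ (Fin d)), θ) ∈ C := by
    intro θ i j
    show (0 : EuclideanSpace ℝ (Fin d)) i * θ j = (0 : EuclideanSpace ℝ (Fin d)) j * θ i
    have h1 : (0 : EuclideanSpace ℝ (Fin d)) i = 0 := rfl
    have h2 : (0 : EuclideanSpace ℝ (Fin d)) j = 0 := rfl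
    rw [h1, h2]; ring
  -- coercivity radii
  set R : ℝ := (G0 + α + lam * (Cb ^ 2 / lmin) + 1) / (α * cindep) with hRdef
  have hRnn : 0 ≤ R := by
    rw [hRdef]
    have h1 : 0 ≤ lam * (Cb ^ 2 / lmin) :=
      mul_nonneg hlam (div_nonneg (sq_nonneg _) (le_of_lt hlmin0))
    positivity
  set Rθ : ℝ := (2 * Cb + lmin + (G0 + 1) / lam) / lmin with hRθdef
  have hRθnn : 0 ≤ Rθ := by
    rw [hRθdef]
    have h1 : 0 ≤ (G0 + 1) / lam := div_nonneg (by linarith) hlam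
    positivity
  have hq_ge : ∀ θ : EuclideanSpace ℝ (Fin d),
      lmin * ‖θ‖ ^ 2 - 2 * Cb * ‖θ‖
        ≤ (∫ x, ⟪θ, Φ x⟫ ^ 2 ∂μX) - 2 * ∫ x, r x * ⟪θ, Φ x⟫ ∂μX := by
    intro θ
    have h1 := hlmin θ
    have h2 := (abs_le.mp (hB_le θ)).2
    linarith
  have hqlow : ∀ θ : EuclideanSpace ℝ (Fin d),
      -(lam * (Cb ^ 2 / lmin))
        ≤ lam * ((∫ x, ⟪θ, Φ x⟫ ^ 2 ∂μX) - 2 * ∫ x, r x * ⟪θ, Φ x⟫ ∂μX) := by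
    intro θ
    have h1 := hq_ge θ
    have hdiv : Cb ^ 2 / lmin * lmin = Cb ^ 2 := div_mul_cancel₀ _ (ne_of_gt hlmin0)
    have h2 : -(Cb ^ 2 / lmin) ≤ lmin * ‖θ‖ ^ 2 - 2 * Cb * ‖θ‖ := by
      nlinarith [sq_nonneg (lmin * ‖θ‖ - Cb), hlmin0]
    have h3 : -(Cb ^ 2 / lmin) ≤ (∫ x, ⟪θ, Φ x⟫ ^ 2 ∂μX) - 2 * ∫ x, r x * ⟪θ, Φ x⟫ ∂μX := by
      linarith
    have := mul_le_mul_of_nonneg_left h3 hlam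
    rw [mul_neg] at this
    linarith
  have hcoer1 : ∀ q : (EuclideanSpace ℝ (Fin d)) × (EuclideanSpace ℝ (Fin d)),
      R < ‖q.1‖ → G0 < F q := by
    intro q hq
    have h1 := hGcoer q.1
    have h3 := hqlow q.2
    have h4 : α * cindep * R = G0 + α + lam * (Cb ^ 2 / lmin) + 1 := by
      rw [hRdef]
      field_simp
    have h5 : α * cindep * R < α * cindep * ‖q.1‖ :=
      mul_lt_mul_of_pos_left hq (by positivity)
    have h6 : α * (cindep * ‖q.1‖ - 1) = α * cindep * ‖q.1‖ - α := by ring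
    simp only [hFdef]
    linarith
  have hcoer2 : 0 < lam → ∀ q : (EuclideanSpace ℝ (Fin d)) × (EuclideanSpace ℝ (Fin d)),
      Rθ < ‖q.2‖ → G0 < F q := by
    intro hlampos q hq
    have h1 := hq_ge q.2
    have h2 : lmin * Rθ = 2 * Cb + lmin + (G0 + 1) / lam := by
      rw [hRθdef]
      field_simp
    have hRθ1 : 1 ≤ Rθ := by
      have h3 : 0 ≤ (G0 + 1) / lam := div_nonneg (by linarith) hlam
      nlinarith
    have h4 : (G0 + 1) / lam * lam = G0 + 1 := by
      field_simp
    have h5 : (G0 + 1) / lam ≤ ‖q.2‖ * (lmin * ‖q.2‖ - 2 * Cb) := by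
      have h6 : lmin + (G0 + 1) / lam ≤ lmin * ‖q.2‖ - 2 * Cb := by nlinarith
      have h7 : 0 ≤ (G0 + 1) / lam := div_nonneg (by linarith) hlam
      nlinarith
    have h8 : G0 + 1 ≤ lam * ((∫ x, ⟪q.2, Φ x⟫ ^ 2 ∂μX) - 2 * ∫ x, r x * ⟪q.2, Φ x⟫ ∂μX) := by
      have h9 : (G0 + 1) / lam ≤ (∫ x, ⟪q.2, Φ x⟫ ^ 2 ∂μX) - 2 * ∫ x, r x * ⟪q.2, Φ x⟫ ∂μX := by
        nlinarith
      calc G0 + 1 = lam * ((G0 + 1) / lam) := by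
            field_simp
        _ ≤ lam * ((∫ x, ⟪q.2, Φ x⟫ ^ 2 ∂μX) - 2 * ∫ x, r x * ⟪q.2, Φ x⟫ ∂μX) :=
            mul_le_mul_of_nonneg_left h9 hlam
    have h10 := hGnonneg q.1
    simp only [hFdef]
    linarith
  -- the compact constraint region and its minimizer
  set K : Set ((EuclideanSpace ℝ (Fin d)) × (EuclideanSpace ℝ (Fin d))) :=
    (Metric.closedBall 0 R ×ˢ Metric.closedBall 0 Rθ) ∩ C with hKdef
  have hKcpt : IsCompact K :=
    ((isCompact_closedBall _ _).prod (isCompact_closedBall _ _)).inter_right hCclosed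
  have hK0 : ((0 : EuclideanSpace ℝ (Fin d)), (0 : EuclideanSpace ℝ (Fin d))) ∈ K := by
    refine ⟨⟨?_, ?_⟩, hCzero 0⟩
    · simpa using hRnn
    · simpa using hRθnn
  obtain ⟨qbar, hqbarK, hqbarmin⟩ := hKcpt.exists_isMinOn ⟨_, hK0⟩ hFcont.continuousOn
  have hF00 : F (0, 0) = G0 := by
    simp only [hFdef]
    rw [hG0eq]
    simp [inner_zero_left]
  have hFqbar_le : F qbar ≤ G0 := by
    have h := isMinOn_iff.mp hqbarmin (0, 0) hK0
    rwa [hF00] at h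
  have hglob : ∀ q ∈ C, F qbar ≤ F q := by
    intro q hqC
    by_cases h1 : ‖q.1‖ ≤ R
    · rcases eq_or_lt_of_le hlam with hlam0 | hlampos
      · have hmem : (q.1, (0 : EuclideanSpace ℝ (Fin d))) ∈ K := by
          refine ⟨⟨?_, ?_⟩, ?_⟩
          · simpa [mem_closedBall_zero_iff] using h1
          · simpa using hRθnn
          · intro i j
            show q.1 i * (0 : EuclideanSpace ℝ (Fin d)) j
              = q.1 j * (0 : EuclideanSpace ℝ (Fin d)) i
            have h2 : (0 : EuclideanSpace ℝ (Fin d)) i = 0 := rfl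
            have h3 : (0 : EuclideanSpace ℝ (Fin d)) j = 0 := rfl
            rw [h2, h3]; ring
        have h4 : F qbar ≤ F (q.1, (0 : EuclideanSpace ℝ (Fin d))) :=
          isMinOn_iff.mp hqbarmin _ hmem
        have h5 : F (q.1, (0 : EuclideanSpace ℝ (Fin d))) = F q := by
          simp only [hFdef, ← hlam0]
          ring
        rwa [h5] at h4
      · by_cases h2 : ‖q.2‖ ≤ Rθ
        · refine isMinOn_iff.mp hqbarmin q ⟨⟨?_, ?_⟩, ?_⟩
          rotate_right
          · exact hqC
          · simpa [mem_closedBall_zero_iff] using h1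
          · simpa [mem_closedBall_zero_iff] using h2
        · have := hcoer2 hlampos q (not_le.mp h2)
          linarith
    · have := hcoer1 q (not_le.mp h1)
      linarith
  -- case split on lam and on qbar.1
  rcases eq_or_lt_of_le hlam with hlam0 | hlampos
  · -- lam = 0 : any minimizer of the first coordinate works
    refine ⟨qbar.1, 0, ?_⟩
    intro γ β
    rw [hpop, hpop]
    have h5 : F (qbar.1, (0:ℝ) • qbar.1) = F qbar := by
      simp only [hFdef, ← hlam0]
      ring
    rw [h5]
    exact hglob _ (hCsmul γ β)
  · by_cases hγbar : qbar.1 = 0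
    · -- impossible: qbar.2 would be a global minimizer of the quadratic part,
      -- forcing E[⟪qbar.2,Φ⟫] = 1, and then small multiples of qbar.2 beat G0.
      exfalso
      have hqeta : (qbar.1, qbar.2) = qbar := rfl
      have hFqbar : F qbar = G0 + lam * ((∫ x, ⟪qbar.2, Φ x⟫ ^ 2 ∂μX)
          - 2 * ∫ x, r x * ⟪qbar.2, Φ x⟫ ∂μX) := by
        conv_lhs => rw [← hqeta]
        simp only [hFdef]
        rw [hγbar, hG0eq]
      have hqmin : ∀ θ : EuclideanSpace ℝ (Fin d),
          ((∫ x, ⟪qbar.2, Φ x⟫ ^ 2 ∂μX) - 2 * ∫ x, r x * ⟪qbar.2, Φ x⟫ ∂μX)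
            ≤ (∫ x, ⟪θ, Φ x⟫ ^ 2 ∂μX) - 2 * ∫ x, r x * ⟪θ, Φ x⟫ ∂μX := by
        intro θ
        have h1 := hglob _ (hCzero θ)
        rw [hFqbar] at h1
        have h2 : F ((0 : EuclideanSpace ℝ (Fin d)), θ)
            = G0 + lam * ((∫ x, ⟪θ, Φ x⟫ ^ 2 ∂μX) - 2 * ∫ x, r x * ⟪θ, Φ x⟫ ∂μX) := by
          simp only [hFdef]
          rw [hG0eq]
        rw [h2] at h1
        have h3 : lam * ((∫ x, ⟪qbar.2, Φ x⟫ ^ 2 ∂μX) - 2 * ∫ x, r x * ⟪qbar.2, Φ x⟫ ∂μX)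
            ≤ lam * ((∫ x, ⟪θ, Φ x⟫ ^ 2 ∂μX) - 2 * ∫ x, r x * ⟪θ, Φ x⟫ ∂μX) := by linarith
        exact le_of_mul_le_mul_left h3 hlampos
      have hstat : (∫ x, ⟪qbar.2, Φ x⟫ ∂μX) = 1 := by
        have h0 : ∀ s : ℝ, 0 ≤ 1 * s ^ 2 + 2 * ((∫ x, ⟪qbar.2, Φ x⟫ ∂μX) - 1) * s := by
          intro s
          have h1 := hqmin (qbar.2 + s • γ1)
          rw [hA_exp qbar.2 s, hB_exp qbar.2 s] at h1
          nlinarith [h1]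
        have := quad_coeff_zero (by norm_num) h0
        linarith
      set c2 : ℝ := Cf * (∫ x, ⟪qbar.2, Φ x⟫ ^ 2 ∂μX) with hc2def
      have hc2nn : 0 ≤ c2 := by
        rw [hc2def]
        exact mul_nonneg hCf (integral_nonneg fun x => sq_nonneg _)
      have h1α : 0 < 1 - α := by linarith
      set t : ℝ := (1 - α) / (2 * (c2 + 1)) with htdef
      have ht : 0 < t := by rw [htdef]; positivity
      have hGt : (∫ p, pinball α ⟪t • qbar.2, Φ p.1⟫ p.2 ∂P) < G0 := by
        have h1 := hGupper (t • qbar.2)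
        rw [hI_smul, hA_smul, hstat, mul_one] at h1
        have h2 : Cf * (t ^ 2 * (∫ x, ⟪qbar.2, Φ x⟫ ^ 2 ∂μX)) = c2 * t ^ 2 := by
          rw [hc2def]; ring
        rw [h2] at h1
        have h3 : c2 * t ^ 2 ≤ (c2 + 1) * t * t := by nlinarith
        have h4 : (c2 + 1) * t = (1 - α) / 2 := by
          rw [htdef]
          field_simp
        nlinarith
      have hmem : (t • qbar.2, qbar.2) ∈ C := by
        intro i j
        show (t • qbar.2) i * qbar.2 j = (t • qbar.2) j * qbar.2 i
        have h1 : (t • qbar.2) i = t * qbar.2 i := rfl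
        have h2 : (t • qbar.2) j = t * qbar.2 j := rfl
        rw [h1, h2]; ring
      have h5 := hglob _ hmem
      have h6 : F (t • qbar.2, qbar.2)
          = (∫ p, pinball α ⟪t • qbar.2, Φ p.1⟫ p.2 ∂P)
            + lam * ((∫ x, ⟪qbar.2, Φ x⟫ ^ 2 ∂μX) - 2 * ∫ x, r x * ⟪qbar.2, Φ x⟫ ∂μX) := by
        simp only [hFdef]
      rw [hFqbar, h6] at h5
      linarith
    · -- extract βbar with qbar.2 = βbar • qbar.1
      have hex : ∃ i : Fin d, qbar.1 i ≠ 0 := by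
        by_contra h
        push_neg at h
        apply hγbar
        ext i
        exact h i
      obtain ⟨i, hi⟩ := hex
      have hqC : qbar ∈ C := hqbarK.2
      set βbar : ℝ := qbar.2 i / qbar.1 i with hβdef
      have hθ : qbar.2 = βbar • qbar.1 := by
        ext j
        have hcij := hqC i j
        have h1 : (βbar • qbar.1) j = βbar * qbar.1 j := rfl
        rw [h1, hβdef]
        field_simp
        linarith [hcij]
      refine ⟨qbar.1, βbar, ?_⟩
      intro γ β
      rw [hpop, hpop, ← hθ]
      have hqeta : (qbar.1, qbar.2) = qbar := rfl
      rw [hqeta]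
      exact hglob _ (hCsmul γ β)
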